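/- For every p ∈ ℝ⁴ with p² ≠ 0, the gauge-transformation tensor 𝒢 and the gauge-fixing projection tensor 𝓛 satisfy: (i) 𝒢^κ_{μν} 𝓛^{μν}_λ = δ^κ_λ, summing over μ, ν (𝒢 and 𝓛 are inverse to each other); and (ii) 𝓛^{ρσ}_τ 𝒢^τ_{μν} = 𝕃^{ρσ}_{μν}, summing over τ (the graviton longitudinal projector 𝕃 decomposes as the product of 𝓛 and 𝒢). -/

import Mathlib

noncomputable section

/-- Minkowski metric components `η_{μν} = η^{μν} = diag(1, -1, -1, -1)`. -/
def η : Fin 4 → Fin 4 → ℝ := fun μ ν => if μ = ν then (if μ = 0 then 1 else -1) else 0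

/-- Kronecker delta. -/
def δ : Fin 4 → Fin 4 → ℝ := fun μ ν => if μ = ν then 1 else 0

/-- Lowered index: `lo p μ = p_μ = η_{μν} p^ν`. -/
def lo (p : Fin 4 → ℝ) (μ : Fin 4) : ℝ := ∑ ν, η μ ν * p ν

/-- Minkowski inner product `p·q = η_{μν} p^μ q^ν`. -/
def mdot (p q : Fin 4 → ℝ) : ℝ := ∑ μ, ∑ ν, η μ ν * p μ * q ν

/-- Graviton longitudinal projector `𝕃^{ρσ}_{μν}`. -/
def LL (p : Fin 4 → ℝ) (ρ σ μ ν : Fin 4) : ℝ :=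
  (1 / (2 * mdot p p)) *
    (δ ρ μ * p σ * lo p ν + δ σ μ * p ρ * lo p ν + δ ρ ν * p σ * lo p μ + δ σ ν * p ρ * lo p μ
      - 2 * η ρ σ * lo p μ * lo p ν)

/-- Graviton identity tensor `𝕀^{ρσ}_{μν}`. -/
def II (ρ σ μ ν : Fin 4) : ℝ := (1 / 2) * (δ ρ μ * δ σ ν + δ σ μ * δ ρ ν)

/-- Graviton transversal projector `𝕋^{ρσ}_{μν}`. -/
def TT (p : Fin 4 → ℝ) (ρ σ μ ν : Fin 4) : ℝ := II ρ σ μ ν - LL p ρ σ μ ν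

/-- The metric `𝔾_{μνρσ}`. -/
def Gmet (p : Fin 4 → ℝ) (μ ν ρ σ : Fin 4) : ℝ :=
  (1 / mdot p p) * (η μ ρ * η ν σ + η μ σ * η ν ρ - η μ ν * η ρ σ)

/-- The inverse metric `𝔾^{μνρσ}`. -/
def GmetInv (p : Fin 4 → ℝ) (μ ν ρ σ : Fin 4) : ℝ :=
  (mdot p p / 4) * (η μ ρ * η ν σ + η μ σ * η ν ρ - η μ ν * η ρ σ)

/-- Gauge-transformation tensor `𝒢^κ_{μν}`. -/
def Gt (p : Fin 4 → ℝ) (κ μ ν : Fin 4) : ℝ :=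
  (1 / mdot p p) * (lo p μ * δ κ ν + lo p ν * δ κ μ)

/-- Gauge-fixing projection tensor `𝓛^{ρσ}_λ`. -/
def Lt (p : Fin 4 → ℝ) (ρ σ lam : Fin 4) : ℝ :=
  (1 / 2) * (p ρ * δ σ lam + p σ * δ ρ lam - lo p lam * η ρ σ)

lemma sum_delta_right (f : Fin 4 → ℝ) (c : Fin 4) : ∑ x, f x * δ c x = f c := by
  simp [δ, eq_comm, mul_ite]

lemma sum_delta_left (f : Fin 4 → ℝ) (c : Fin 4) : ∑ x, f x * δ x c = f c := by
  simp [δ, mul_ite]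

lemma sum_lo_mul (p : Fin 4 → ℝ) : ∑ μ, lo p μ * p μ = mdot p p := by
  simp [lo, mdot, η, Fin.sum_univ_four]

lemma sum_lo_eta (p : Fin 4 → ℝ) (κ : Fin 4) : ∑ μ, lo p μ * η μ κ = p κ := by
  fin_cases κ <;> simp [lo, η, Fin.sum_univ_four]

lemma Lt_symm (p : Fin 4 → ℝ) (μ ν lam : Fin 4) : Lt p μ ν lam = Lt p ν μ lam := by
  unfold Lt η; ring_nf
  congr 1
  by_cases h : μ = ν
  · subst h; rfl
  · simp [h, Ne.symm h]

lemma sum_lo_Lt (p : Fin 4 → ℝ) (κ lam : Fin 4) :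
    ∑ μ, lo p μ * Lt p μ κ lam = (1/2) * mdot p p * δ κ lam := by
  have h : ∀ μ, lo p μ * Lt p μ κ lam =
      (1/2 * δ κ lam) * (lo p μ * p μ) + (lo p μ * (p κ / 2)) * δ μ lam
        - (1/2 * lo p lam) * (lo p μ * η μ κ) := by
    intro μ; unfold Lt; ring
  rw [Finset.sum_congr rfl fun μ _ => h μ]
  rw [Finset.sum_sub_distrib, Finset.sum_add_distrib, ← Finset.mul_sum, ← Finset.mul_sum,
    sum_lo_mul, sum_lo_eta, sum_delta_left (fun μ => lo p μ * (p κ / 2)) lam]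
  ring

/-- The gauge-transformation tensor `𝒢` and the gauge-fixing projection tensor `𝓛` are inverse
to each other, and the graviton longitudinal projector `𝕃` decomposes as their product. -/
theorem gauge_tensors_inverse_and_decomposition (p : Fin 4 → ℝ) (hp : mdot p p ≠ 0) :
    (∀ κ lam : Fin 4, ∑ μ, ∑ ν, Gt p κ μ ν * Lt p μ ν lam = δ κ lam) ∧
    (∀ ρ σ μ ν : Fin 4, ∑ τ, Lt p ρ σ τ * Gt p τ μ ν = LL p ρ σ μ ν) := by
  constructor
  · intro κ lam
    have h : ∀ μ ν : Fin 4, Gt p κ μ ν * Lt p μ ν lam =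
        (1 / mdot p p * (lo p μ * Lt p μ ν lam)) * δ κ ν
          + (1 / mdot p p * (lo p ν * Lt p μ ν lam)) * δ κ μ := by
      intro μ ν; unfold Gt; ring
    calc ∑ μ, ∑ ν, Gt p κ μ ν * Lt p μ ν lam
        = ∑ μ, ((1 / mdot p p * (lo p μ * Lt p μ κ lam))
            + ∑ ν, (1 / mdot p p * (lo p ν * Lt p μ ν lam)) * δ κ μ) := by
          refine Finset.sum_congr rfl fun μ _ => ?_
          rw [Finset.sum_congr rfl fun ν _ => h μ ν, Finset.sum_add_distrib,
            sum_delta_right (fun ν => 1 / mdot p p * (lo p μ * Lt p μ ν lam)) κ]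
      _ = (∑ μ, 1 / mdot p p * (lo p μ * Lt p μ κ lam))
            + ∑ μ, (∑ ν, 1 / mdot p p * (lo p ν * Lt p μ ν lam)) * δ κ μ := by
          rw [Finset.sum_add_distrib]
          congr 1
          exact Finset.sum_congr rfl fun μ _ => by rw [← Finset.sum_mul]
      _ = (∑ μ, 1 / mdot p p * (lo p μ * Lt p μ κ lam))
            + ∑ ν, 1 / mdot p p * (lo p ν * Lt p κ ν lam) := by
          rw [sum_delta_right (fun μ => ∑ ν, 1 / mdot p p * (lo p ν * Lt p μ ν lam)) κ]
      _ = 2 * (1 / mdot p p) * ∑ μ, lo p μ * Lt p μ κ lam := by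
          rw [← Finset.mul_sum]
          have : ∀ ν : Fin 4, 1 / mdot p p * (lo p ν * Lt p κ ν lam)
              = 1 / mdot p p * (lo p ν * Lt p ν κ lam) := fun ν => by rw [Lt_symm p κ ν lam]
          rw [Finset.sum_congr rfl fun ν _ => this ν, ← Finset.mul_sum]
          ring
      _ = δ κ lam := by rw [sum_lo_Lt]; field_simp
  · intro ρ σ μ ν
    have h : ∀ τ : Fin 4, Lt p ρ σ τ * Gt p τ μ ν =
        (1 / mdot p p * (lo p μ * Lt p ρ σ τ)) * δ τ ν
          + (1 / mdot p p * (lo p ν * Lt p ρ σ τ)) * δ τ μ := by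
      intro τ; unfold Gt; ring
    rw [Finset.sum_congr rfl fun τ _ => h τ, Finset.sum_add_distrib,
      sum_delta_left (fun τ => 1 / mdot p p * (lo p μ * Lt p ρ σ τ)) ν,
      sum_delta_left (fun τ => 1 / mdot p p * (lo p ν * Lt p ρ σ τ)) μ]
    unfold Lt LL
    field_simp
    ring
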